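/- Let n ≥ 3 and A ∈ ℝ^{n×n} be a symmetric matrix with exactly two distinct eigenvalues λ < μ, where the smallest eigenvalue λ has multiplicity one. Then the quadratic function q_A(x) = ⟨Ax, x⟩ is spherically quasi-convex on C = 𝕊^{n-1} ∩ ℝⁿ₊₊ if and only if there exists an eigenvector of A corresponding to λ all of whose components are nonnegative. -/

import Mathlib

set_option maxHeartbeats 4000000


open scoped InnerProductSpace

/-- The (constant-speed) parametrization on `[0,1]` of the minimal geodesic segment of the
unit sphere joining `x` to a non-antipodal point `y`, namely
`t ↦ (cos(t·d(x,y)) - ⟪x,y⟫ sin(t·d(x,y))/√(1-⟪x,y⟫²)) • x + (sin(t·d(x,y))/√(1-⟪x,y⟫²)) • y`,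
where `d(x,y) = arccos ⟪x,y⟫` is the intrinsic distance on the sphere. -/
noncomputable def geoSeg {n : ℕ} (x y : EuclideanSpace ℝ (Fin n)) (t : ℝ) :
    EuclideanSpace ℝ (Fin n) :=
  (Real.cos (t * Real.arccos ⟪x, y⟫_ℝ) -
      ⟪x, y⟫_ℝ * Real.sin (t * Real.arccos ⟪x, y⟫_ℝ) / Real.sqrt (1 - ⟪x, y⟫_ℝ ^ 2)) • x +
    (Real.sin (t * Real.arccos ⟪x, y⟫_ℝ) / Real.sqrt (1 - ⟪x, y⟫_ℝ ^ 2)) • y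

/-- `γ`, parametrized (with constant speed) on `[0,1]`, is a minimal geodesic segment of the
unit sphere joining `x` to `y`.  For `y ≠ -x` it is the unique such segment `geoSeg x y`
(which is constantly `x` when `y = x`); for `y = -x` it is
`t ↦ cos(tπ) • x + sin(tπ) • v` for some unit vector `v` orthogonal to `x`. -/
def IsMinGeodesic {n : ℕ} (γ : ℝ → EuclideanSpace ℝ (Fin n))
    (x y : EuclideanSpace ℝ (Fin n)) : Prop :=
  ‖x‖ = 1 ∧ ‖y‖ = 1 ∧
    ((y ≠ -x ∧ γ = geoSeg x y) ∨
      (y = -x ∧ ∃ v : EuclideanSpace ℝ (Fin n), ‖v‖ = 1 ∧ ⟪x, v⟫_ℝ = 0 ∧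
        γ = fun t => Real.cos (t * Real.pi) • x + Real.sin (t * Real.pi) • v))

/-- A subset of the unit sphere is spherically convex if it contains every minimal geodesic
segment joining any two of its points. -/
def SphericallyConvex {n : ℕ} (C : Set (EuclideanSpace ℝ (Fin n))) : Prop :=
  ∀ x ∈ C, ∀ y ∈ C, ∀ γ : ℝ → EuclideanSpace ℝ (Fin n),
    IsMinGeodesic γ x y → ∀ t ∈ Set.Icc (0 : ℝ) 1, γ t ∈ C

/-- `f` is spherically quasi-convex on `C`: along every minimal geodesic segment lying in `C`,
the composition with `f` is quasi-convex, i.e. `f(γ t) ≤ max (f(γ t₁)) (f(γ t₂))` for all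
`t ∈ [t₁, t₂]`. -/
def SphQuasiConvexOn {n : ℕ} (C : Set (EuclideanSpace ℝ (Fin n)))
    (f : EuclideanSpace ℝ (Fin n) → ℝ) : Prop :=
  ∀ x ∈ C, ∀ y ∈ C, ∀ γ : ℝ → EuclideanSpace ℝ (Fin n),
    IsMinGeodesic γ x y → (∀ t ∈ Set.Icc (0 : ℝ) 1, γ t ∈ C) →
    ∀ t₁ t t₂ : ℝ, 0 ≤ t₁ → t₁ ≤ t → t ≤ t₂ → t₂ ≤ 1 →
      f (γ t) ≤ max (f (γ t₁)) (f (γ t₂))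

/-- Multiplication of an `n × n` real matrix with a vector of `EuclideanSpace ℝ (Fin n)`. -/
noncomputable def mulVecE {n : ℕ} (A : Matrix (Fin n) (Fin n) ℝ)
    (x : EuclideanSpace ℝ (Fin n)) : EuclideanSpace ℝ (Fin n) :=
  WithLp.toLp 2 (fun i => ∑ j, A i j * x j)

/-! ### Auxiliary lemmas -/

noncomputable def mulVecL {n : ℕ} (A : Matrix (Fin n) (Fin n) ℝ) :
    EuclideanSpace ℝ (Fin n) →ₗ[ℝ] EuclideanSpace ℝ (Fin n) where
  toFun := mulVecE A
  map_add' x y := by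
    ext i
    simp [mulVecE, mul_add, Finset.sum_add_distrib]
  map_smul' c x := by
    ext i
    simp [mulVecE, Finset.mul_sum]
    ring_nf
    simp [mul_comm, mul_left_comm]

noncomputable def rankOneL {n : ℕ} (lam mu : ℝ) (v0 : EuclideanSpace ℝ (Fin n)) :
    EuclideanSpace ℝ (Fin n) →ₗ[ℝ] EuclideanSpace ℝ (Fin n) where
  toFun x := mu • x + ((lam - mu) * ⟪v0, x⟫_ℝ) • v0
  map_add' x y := by
    rw [inner_add_right]
    module
  map_smul' c x := by
    simp only [RingHom.id_apply]
    rw [real_inner_smul_right]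
    module

theorem mulVecE_formula {n : ℕ} (hn : 0 < n)
    (A : Matrix (Fin n) (Fin n) ℝ) (lam mu : ℝ)
    (v : Fin n → EuclideanSpace ℝ (Fin n)) (hv : Orthonormal ℝ v)
    (heig0 : mulVecE A (v ⟨0, hn⟩) = lam • v ⟨0, hn⟩)
    (heig : ∀ i : Fin n, i ≠ ⟨0, hn⟩ → mulVecE A (v i) = mu • v i)
    (x : EuclideanSpace ℝ (Fin n)) :
    mulVecE A x = mu • x + ((lam - mu) * ⟪v ⟨0, hn⟩, x⟫_ℝ) • v ⟨0, hn⟩ := by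
  have hcard : Fintype.card (Fin n) = Module.finrank ℝ (EuclideanSpace ℝ (Fin n)) := by
    simp
  haveI : Nonempty (Fin n) := ⟨⟨0, hn⟩⟩
  let b := basisOfOrthonormalOfCardEqFinrank hv hcard
  have hb : ∀ i, b i = v i := fun i => by
    simp [b, coe_basisOfOrthonormalOfCardEqFinrank]
  have : mulVecL A = rankOneL lam mu (v ⟨0, hn⟩) := by
    apply b.ext
    intro i
    rw [hb]
    by_cases h : i = ⟨0, hn⟩
    · subst h
      show mulVecE A _ = _
      rw [heig0]
      have h1 : ⟪v ⟨0, hn⟩, v ⟨0, hn⟩⟫_ℝ = 1 := by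
        have := hv.1 ⟨0, hn⟩
        rw [real_inner_self_eq_norm_sq, this]; norm_num
      show _ = mu • v ⟨0, hn⟩ + ((lam - mu) * ⟪v ⟨0, hn⟩, v ⟨0, hn⟩⟫_ℝ) • v ⟨0, hn⟩
      rw [h1]
      module
    · show mulVecE A _ = _
      rw [heig i h]
      have h0 : ⟪v ⟨0, hn⟩, v i⟫_ℝ = 0 := hv.2 (Ne.symm h)
      show _ = mu • v i + ((lam - mu) * ⟪v ⟨0, hn⟩, v i⟫_ℝ) • v ⟨0, hn⟩
      rw [h0]
      simp
  exact congrFun (congrArg (fun L => L.toFun) this) x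

theorem qA_formula {n : ℕ} (hn : 0 < n)
    (A : Matrix (Fin n) (Fin n) ℝ) (lam mu : ℝ)
    (v : Fin n → EuclideanSpace ℝ (Fin n)) (hv : Orthonormal ℝ v)
    (heig0 : mulVecE A (v ⟨0, hn⟩) = lam • v ⟨0, hn⟩)
    (heig : ∀ i : Fin n, i ≠ ⟨0, hn⟩ → mulVecE A (v i) = mu • v i)
    (x : EuclideanSpace ℝ (Fin n)) (hx : ‖x‖ = 1) :
    ⟪mulVecE A x, x⟫_ℝ = mu + (lam - mu) * ⟪v ⟨0, hn⟩, x⟫_ℝ ^ 2 := by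
  rw [mulVecE_formula hn A lam mu v hv heig0 heig x, inner_add_left,
    real_inner_smul_left, real_inner_smul_left, real_inner_self_eq_norm_sq, hx]
  ring

theorem inner_sum_formula {n : ℕ} (x y : EuclideanSpace ℝ (Fin n)) :
    ⟪x, y⟫_ℝ = ∑ i, x i * y i := by
  simp [PiLp.inner_apply, RCLike.inner_apply, conj_trivial, mul_comm]

section scalar
variable {c : ℝ}

theorem arccos_lt_pi' (hc2 : -1 < c) : Real.arccos c < Real.pi :=
  lt_of_le_of_ne (Real.arccos_le_pi c) (fun h => absurd (Real.arccos_eq_pi.1 h) (by linarith))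

theorem sin_arccos_pos (hc1 : c < 1) (hc2 : -1 < c) : 0 < Real.sin (Real.arccos c) :=
  Real.sin_pos_of_pos_of_lt_pi (Real.arccos_pos.2 hc1) (arccos_lt_pi' hc2)

theorem coeff_eq (hc1 : c < 1) (hc2 : -1 < c) (t : ℝ) :
    Real.cos (t * Real.arccos c) - c * Real.sin (t * Real.arccos c) / Real.sqrt (1 - c ^ 2) =
      Real.sin ((1 - t) * Real.arccos c) / Real.sin (Real.arccos c) := by
  have hsin := Real.sin_arccos c
  have hspos := sin_arccos_pos hc1 hc2
  have hcos : Real.cos (Real.arccos c) = c := Real.cos_arccos hc2.le hc1.le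
  rw [← hsin]
  have : (1 - t) * Real.arccos c = Real.arccos c - t * Real.arccos c := by ring
  rw [this, Real.sin_sub, hcos]
  field_simp
end scalar

theorem geoSeg_self {n : ℕ} (x : EuclideanSpace ℝ (Fin n)) (hx : ‖x‖ = 1) (t : ℝ) :
    geoSeg x x t = x := by
  have h1 : ⟪x, x⟫_ℝ = 1 := by
    rw [real_inner_self_eq_norm_sq, hx]; norm_num
  simp [geoSeg, h1, hx]

theorem geoSeg_eq {n : ℕ} (x y : EuclideanSpace ℝ (Fin n))
    (hc1 : ⟪x, y⟫_ℝ < 1) (hc2 : -1 < ⟪x, y⟫_ℝ) (t : ℝ) :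
    geoSeg x y t =
      (Real.sin ((1 - t) * Real.arccos ⟪x, y⟫_ℝ) / Real.sin (Real.arccos ⟪x, y⟫_ℝ)) • x +
        (Real.sin (t * Real.arccos ⟪x, y⟫_ℝ) / Real.sin (Real.arccos ⟪x, y⟫_ℝ)) • y := by
  rw [geoSeg, coeff_eq hc1 hc2, Real.sin_arccos]

theorem geoSeg_zero {n : ℕ} (x y : EuclideanSpace ℝ (Fin n))
    (hc1 : ⟪x, y⟫_ℝ < 1) (hc2 : -1 < ⟪x, y⟫_ℝ) :
    geoSeg x y 0 = x := by
  rw [geoSeg_eq x y hc1 hc2]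
  have hspos := sin_arccos_pos hc1 hc2
  simp only [sub_zero, zero_mul, one_mul, Real.sin_zero, zero_div, zero_smul, add_zero,
    div_self hspos.ne', one_smul]

theorem geoSeg_one {n : ℕ} (x y : EuclideanSpace ℝ (Fin n))
    (hc1 : ⟪x, y⟫_ℝ < 1) (hc2 : -1 < ⟪x, y⟫_ℝ) :
    geoSeg x y 1 = y := by
  rw [geoSeg_eq x y hc1 hc2]
  have hspos := sin_arccos_pos hc1 hc2
  simp only [sub_self, zero_mul, one_mul, Real.sin_zero, zero_div, zero_smul, zero_add,
    div_self hspos.ne', one_smul]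

theorem geoSeg_norm {n : ℕ} (x y : EuclideanSpace ℝ (Fin n)) (hx : ‖x‖ = 1) (hy : ‖y‖ = 1)
    (hc1 : ⟪x, y⟫_ℝ < 1) (hc2 : -1 < ⟪x, y⟫_ℝ) {t : ℝ} (ht0 : 0 ≤ t) (ht1 : t ≤ 1) :
    ‖geoSeg x y t‖ = 1 := by
  rw [geoSeg_eq x y hc1 hc2]
  set θ := Real.arccos ⟪x, y⟫_ℝ with hθ
  have hspos := sin_arccos_pos hc1 hc2
  have hcos : Real.cos θ = ⟪x, y⟫_ℝ := Real.cos_arccos hc2.le hc1.le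
  set a := Real.sin ((1 - t) * θ) / Real.sin θ
  set b := Real.sin (t * θ) / Real.sin θ
  have hx2 : ⟪x, x⟫_ℝ = 1 := by rw [real_inner_self_eq_norm_sq, hx]; norm_num
  have hy2 : ⟪y, y⟫_ℝ = 1 := by rw [real_inner_self_eq_norm_sq, hy]; norm_num
  have hnorm : ‖a • x + b • y‖ ^ 2 = a ^ 2 + 2 * a * b * ⟪x, y⟫_ℝ + b ^ 2 := by
    rw [norm_add_sq_real, real_inner_smul_left, real_inner_smul_right,
      norm_smul, norm_smul, hx, hy]
    simp only [mul_one, Real.norm_eq_abs]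
    rw [sq_abs, sq_abs]
    ring
  have key : a ^ 2 + 2 * a * b * ⟪x, y⟫_ℝ + b ^ 2 = 1 := by
    have h1 : Real.sin ((1 - t) * θ) = Real.sin θ * Real.cos (t * θ) -
        Real.cos θ * Real.sin (t * θ) := by
      have : (1 - t) * θ = θ - t * θ := by ring
      rw [this, Real.sin_sub]
    have h2 : Real.sin (t * θ) ^ 2 + Real.cos (t * θ) ^ 2 = 1 := Real.sin_sq_add_cos_sq _
    have h3 : Real.sin θ ^ 2 + Real.cos θ ^ 2 = 1 := Real.sin_sq_add_cos_sq _
    simp only [a, b, h1, ← hcos]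
    have hsθ : Real.sin θ ≠ 0 := hspos.ne'
    field_simp
    linear_combination (Real.sin θ ^ 2) * h2 - Real.sin (t * θ) ^ 2 * h3
  have : ‖a • x + b • y‖ ^ 2 = 1 := by rw [hnorm, key]
  nlinarith [norm_nonneg (a • x + b • y), this]

theorem sin_comb_min {θ P Q t₁ t t₂ : ℝ} (hθ0 : 0 < θ) (hθπ : θ ≤ Real.pi)
    (hP : 0 ≤ P) (hQ : 0 ≤ Q) (h0 : 0 ≤ t₁) (h1 : t₁ ≤ t) (h2 : t ≤ t₂) (h3 : t₂ ≤ 1) :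
    min (P * Real.sin ((1 - t₁) * θ) + Q * Real.sin (t₁ * θ))
        (P * Real.sin ((1 - t₂) * θ) + Q * Real.sin (t₂ * θ))
      ≤ P * Real.sin ((1 - t) * θ) + Q * Real.sin (t * θ) := by
  rcases eq_or_lt_of_le (h1.trans h2) with heq | hlt
  · have ht : t = t₁ := le_antisymm (heq ▸ h2) h1
    subst ht
    exact min_le_left _ _
  · set σ := (t - t₁) / (t₂ - t₁) with hσdef
    have hd : 0 < t₂ - t₁ := sub_pos.2 hlt
    have hσ0 : 0 ≤ σ := div_nonneg (by linarith) hd.le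
    have hσ1 : σ ≤ 1 := (div_le_one hd).2 (by linarith)
    have ha0 : 0 ≤ 1 - σ := by linarith
    have hab : (1 - σ) + σ = 1 := by ring
    have hteq : (1 - σ) * t₁ + σ * t₂ = t := by
      rw [hσdef]
      field_simp
      ring
    have hconc := strictConcaveOn_sin_Icc.concaveOn
    have mem : ∀ s : ℝ, 0 ≤ s → s ≤ 1 → s * θ ∈ Set.Icc (0:ℝ) Real.pi := by
      intro s hs0 hs1
      constructor
      · positivity
      · calc s * θ ≤ 1 * θ := by nlinarith
          _ ≤ Real.pi := by linarith
    have c1 := hconc.2 (mem t₁ h0 (by linarith)) (mem t₂ (by linarith) h3) ha0 hσ0 hab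
    have c2 := hconc.2 (mem (1 - t₁) (by linarith) (by linarith))
      (mem (1 - t₂) (by linarith) (by linarith)) ha0 hσ0 hab
    simp only [smul_eq_mul] at c1 c2
    have e1 : (1 - σ) * (t₁ * θ) + σ * (t₂ * θ) = t * θ := by
      rw [← hteq]; ring
    have e2 : (1 - σ) * ((1 - t₁) * θ) + σ * ((1 - t₂) * θ) = (1 - t) * θ := by
      rw [← hteq]; ring
    rw [e1] at c1
    rw [e2] at c2
    have hF1 := min_le_left (P * Real.sin ((1 - t₁) * θ) + Q * Real.sin (t₁ * θ))
      (P * Real.sin ((1 - t₂) * θ) + Q * Real.sin (t₂ * θ))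
    have hF2 := min_le_right (P * Real.sin ((1 - t₁) * θ) + Q * Real.sin (t₁ * θ))
      (P * Real.sin ((1 - t₂) * θ) + Q * Real.sin (t₂ * θ))
    nlinarith [mul_le_mul_of_nonneg_left c1 hQ, mul_le_mul_of_nonneg_left c2 hP,
      mul_le_mul_of_nonneg_left hF1 ha0, mul_le_mul_of_nonneg_left hF2 hσ0]

theorem inner_geoSeg {n : ℕ} (w x y : EuclideanSpace ℝ (Fin n))
    (hc1 : ⟪x, y⟫_ℝ < 1) (hc2 : -1 < ⟪x, y⟫_ℝ) (t : ℝ) :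
    ⟪w, geoSeg x y t⟫_ℝ =
      (Real.sin ((1 - t) * Real.arccos ⟪x, y⟫_ℝ) / Real.sin (Real.arccos ⟪x, y⟫_ℝ)) * ⟪w, x⟫_ℝ
        + (Real.sin (t * Real.arccos ⟪x, y⟫_ℝ) / Real.sin (Real.arccos ⟪x, y⟫_ℝ)) * ⟪w, y⟫_ℝ := by
  rw [geoSeg_eq x y hc1 hc2, inner_add_right, real_inner_smul_right, real_inner_smul_right]

theorem inner_pos_of_pos {n : ℕ} (hn : 0 < n) (x y : EuclideanSpace ℝ (Fin n))
    (hx : ∀ i, 0 < x i) (hy : ∀ i, 0 < y i) : 0 < ⟪x, y⟫_ℝ := by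
  rw [inner_sum_formula]
  have : Nonempty (Fin n) := ⟨⟨0, hn⟩⟩
  exact Finset.sum_pos (fun i _ => mul_pos (hx i) (hy i)) Finset.univ_nonempty

theorem inner_nonneg_of_nonneg {n : ℕ} (x y : EuclideanSpace ℝ (Fin n))
    (hx : ∀ i, 0 ≤ x i) (hy : ∀ i, 0 ≤ y i) : 0 ≤ ⟪x, y⟫_ℝ := by
  rw [inner_sum_formula]
  exact Finset.sum_nonneg (fun i _ => mul_nonneg (hx i) (hy i))

theorem inner_lt_one_of_ne {n : ℕ} (x y : EuclideanSpace ℝ (Fin n))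
    (hx : ‖x‖ = 1) (hy : ‖y‖ = 1) (hxy : x ≠ y) : ⟪x, y⟫_ℝ < 1 := by
  refine lt_of_le_of_ne ?_ (fun h => hxy ((inner_eq_one_iff_of_norm_eq_one hx hy).1 h))
  calc ⟪x, y⟫_ℝ ≤ ‖x‖ * ‖y‖ := real_inner_le_norm x y
    _ = 1 := by rw [hx, hy]; ring

/-- The geodesic segment between two points of `C` stays in `C`. -/
theorem geoSeg_mem {n : ℕ} (hn : 0 < n) (x y : EuclideanSpace ℝ (Fin n))
    (hx : ‖x‖ = 1) (hy : ‖y‖ = 1) (hxp : ∀ i, 0 < x i) (hyp : ∀ i, 0 < y i)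
    (hxy : x ≠ y) {t : ℝ} (ht0 : 0 ≤ t) (ht1 : t ≤ 1) :
    ‖geoSeg x y t‖ = 1 ∧ ∀ i, 0 < geoSeg x y t i := by
  have hc1 : ⟪x, y⟫_ℝ < 1 := inner_lt_one_of_ne x y hx hy hxy
  have hc2 : -1 < ⟪x, y⟫_ℝ := by
    have := inner_pos_of_pos hn x y hxp hyp
    linarith
  refine ⟨geoSeg_norm x y hx hy hc1 hc2 ht0 ht1, ?_⟩
  rcases eq_or_lt_of_le ht1 with h1 | h1
  · subst h1
    rw [geoSeg_one x y hc1 hc2]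
    exact hyp
  · intro i
    rw [geoSeg_eq x y hc1 hc2]
    have hspos := sin_arccos_pos hc1 hc2
    have hθpos : 0 < Real.arccos ⟪x, y⟫_ℝ := Real.arccos_pos.2 hc1
    have hθpi : Real.arccos ⟪x, y⟫_ℝ < Real.pi := arccos_lt_pi' hc2
    have ha : 0 < Real.sin ((1 - t) * Real.arccos ⟪x, y⟫_ℝ) := by
      apply Real.sin_pos_of_pos_of_lt_pi
      · exact mul_pos (by linarith) hθpos
      · calc (1 - t) * Real.arccos ⟪x, y⟫_ℝ ≤ 1 * Real.arccos ⟪x, y⟫_ℝ := by nlinarith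
          _ < Real.pi := by linarith
    have hb : 0 ≤ Real.sin (t * Real.arccos ⟪x, y⟫_ℝ) := by
      apply Real.sin_nonneg_of_nonneg_of_le_pi
      · positivity
      · calc t * Real.arccos ⟪x, y⟫_ℝ ≤ 1 * Real.arccos ⟪x, y⟫_ℝ := by nlinarith
          _ ≤ Real.pi := by linarith
    show 0 < (_ • x + _ • y) i
    rw [PiLp.add_apply, PiLp.smul_apply, PiLp.smul_apply, smul_eq_mul, smul_eq_mul]
    have h1' : 0 < Real.sin ((1 - t) * Real.arccos ⟪x, y⟫_ℝ) / Real.sin (Real.arccos ⟪x, y⟫_ℝ) :=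
      div_pos ha hspos
    have h2' : 0 ≤ Real.sin (t * Real.arccos ⟪x, y⟫_ℝ) / Real.sin (Real.arccos ⟪x, y⟫_ℝ) :=
      div_nonneg hb hspos.le
    exact add_pos_of_pos_of_nonneg (mul_pos h1' (hxp i)) (mul_nonneg h2' (hyp i).le)


/-- Construction of a unit vector with positive components whose inner product with `v0`
is a positive multiple of `v0 j + ε * (∑ k, v0 k)`. -/
theorem exists_unit_pos_point {n : ℕ} (v0 : EuclideanSpace ℝ (Fin n)) (j : Fin n) (ε : ℝ)
    (hε : 0 < ε) :
    ∃ x : EuclideanSpace ℝ (Fin n), ‖x‖ = 1 ∧ (∀ k, 0 < x k) ∧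
      ∃ r : ℝ, 0 < r ∧ ⟪v0, x⟫_ℝ = r * (v0 j + ε * (∑ k, v0 k)) := by
  set z : EuclideanSpace ℝ (Fin n) := WithLp.toLp 2 (fun k => (if k = j then (1:ℝ) else 0) + ε) with hz
  have hzp : ∀ k, 0 < z k := by
    intro k
    show 0 < (if k = j then (1:ℝ) else 0) + ε
    split <;> linarith
  have hzne : z ≠ 0 := by
    intro h
    have h2 : (0:ℝ) < z j := hzp j
    rw [h, PiLp.zero_apply] at h2
    exact lt_irrefl 0 h2
  have hnz : 0 < ‖z‖ := norm_pos_iff.2 hzne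
  have hinz : ⟪v0, z⟫_ℝ = v0 j + ε * (∑ k, v0 k) := by
    rw [inner_sum_formula]
    show (∑ k, v0 k * ((if k = j then (1:ℝ) else 0) + ε)) = _
    simp only [mul_add, Finset.sum_add_distrib, mul_ite, mul_one, mul_zero]
    rw [Finset.sum_ite_eq' Finset.univ j v0]
    simp only [Finset.mem_univ, if_true, ← Finset.sum_mul]
    ring
  refine ⟨‖z‖⁻¹ • z, ?_, ?_, ‖z‖⁻¹, inv_pos.2 hnz, ?_⟩
  · rw [norm_smul, Real.norm_eq_abs, abs_inv, abs_norm, inv_mul_cancel₀ hnz.ne']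
  · intro k
    rw [PiLp.smul_apply, smul_eq_mul]
    exact mul_pos (inv_pos.2 hnz) (hzp k)
  · rw [real_inner_smul_right, hinz]

/-- Let `n ≥ 3` and let `A` be a symmetric `n × n` matrix with exactly two distinct
eigenvalues `lam < mu`, the smallest one `lam` having multiplicity one (encoded by an
orthonormal basis of eigenvectors `v` with `A v₀ = lam • v₀` and `A vᵢ = mu • vᵢ` for
`i ≠ 0`).  Then `q_A(x) = ⟪Ax, x⟫` is spherically quasi-convex on `C = 𝕊^{n-1} ∩ ℝⁿ₊₊`
if and only if there exists a (nonzero) eigenvector of `A` corresponding to `lam` all of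
whose components are nonnegative. -/
theorem two_eigenvalue_quadratic_sph_quasiconvex_iff {n : ℕ} (hn : 3 ≤ n)
    (A : Matrix (Fin n) (Fin n) ℝ) (hA : A.IsSymm) (lam mu : ℝ) (hlm : lam < mu)
    (v : Fin n → EuclideanSpace ℝ (Fin n)) (hv : Orthonormal ℝ v)
    (heig0 : mulVecE A (v ⟨0, by omega⟩) = lam • v ⟨0, by omega⟩)
    (heig : ∀ i : Fin n, i ≠ ⟨0, by omega⟩ → mulVecE A (v i) = mu • v i) :
    SphQuasiConvexOn (Metric.sphere 0 1 ∩ {x | ∀ i, 0 < x i})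
        (fun x => ⟪mulVecE A x, x⟫_ℝ) ↔
      ∃ w : EuclideanSpace ℝ (Fin n), w ≠ 0 ∧ (∀ i, 0 ≤ w i) ∧ mulVecE A w = lam • w := by
  have hn0 : 0 < n := by omega
  set i0 : Fin n := ⟨0, hn0⟩ with hi0
  set v0 := v i0 with hv0
  have hqf : ∀ x : EuclideanSpace ℝ (Fin n), ‖x‖ = 1 →
      ⟪mulVecE A x, x⟫_ℝ = mu + (lam - mu) * ⟪v0, x⟫_ℝ ^ 2 :=
    fun x hx => qA_formula hn0 A lam mu v hv heig0 heig x hx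
  constructor
  · -- quasiconvex → nonneg eigenvector
    intro hq
    by_contra hcon
    push_neg at hcon
    have hv0ne : v0 ≠ 0 := hv.ne_zero i0
    have h1 : ¬ ∀ i, 0 ≤ v0 i := fun h => (hcon v0 hv0ne h) heig0
    have h2 : ¬ ∀ i, 0 ≤ (-v0) i := by
      intro h
      apply hcon (-v0) (neg_ne_zero.2 hv0ne) h
      have hneg : mulVecE A (-v0) = -(mulVecE A v0) := map_neg (mulVecL A) v0
      rw [hneg, heig0, smul_neg]
    push_neg at h1 h2
    obtain ⟨i, hi⟩ := h1
    obtain ⟨j, hj'⟩ := h2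
    have hj : 0 < v0 j := by
      have : (-v0) j = -(v0 j) := rfl
      rw [this] at hj'
      linarith
    -- construct points x, y in C with ⟪v0,x⟫ > 0 > ⟪v0,y⟫
    set S := ∑ k, v0 k with hS
    set ε := min (v0 j) (-(v0 i)) / (|S| + 1) with hε
    have habs : (0:ℝ) < |S| + 1 := by positivity
    have hεpos : 0 < ε := div_pos (lt_min hj (neg_pos.2 hi)) habs
    have hεb : ε * (|S| + 1) = min (v0 j) (-(v0 i)) := div_mul_cancel₀ _ habs.ne'
    have hεj : ε * (|S| + 1) ≤ v0 j := hεb ▸ min_le_left _ _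
    have hεi : ε * (|S| + 1) ≤ -(v0 i) := hεb ▸ min_le_right _ _
    have hxnum : 0 < v0 j + ε * S := by
      nlinarith [le_abs_self S, neg_abs_le S, hεpos]
    have hynum : v0 i + ε * S < 0 := by
      nlinarith [le_abs_self S, neg_abs_le S, hεpos]
    obtain ⟨x, hnx, hxp, rx, hrx, hinx⟩ := exists_unit_pos_point v0 j ε hεpos
    obtain ⟨y, hny, hyp, ry, hry, hiny⟩ := exists_unit_pos_point v0 i ε hεpos
    have hp : 0 < ⟪v0, x⟫_ℝ := by
      rw [hinx, ← hS]
      exact mul_pos hrx hxnum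
    have hq' : ⟪v0, y⟫_ℝ < 0 := by
      rw [hiny, ← hS]
      exact mul_neg_of_pos_of_neg hry hynum
    have hxy : x ≠ y := by
      intro h
      rw [h] at hp
      linarith
    have hxC : x ∈ Metric.sphere (0:EuclideanSpace ℝ (Fin n)) 1 ∩ {x | ∀ i, 0 < x i} :=
      ⟨mem_sphere_zero_iff_norm.2 hnx, hxp⟩
    have hyC : y ∈ Metric.sphere (0:EuclideanSpace ℝ (Fin n)) 1 ∩ {x | ∀ i, 0 < x i} :=
      ⟨mem_sphere_zero_iff_norm.2 hny, hyp⟩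
    have hc1 : ⟪x, y⟫_ℝ < 1 := inner_lt_one_of_ne x y hnx hny hxy
    have hc2 : -1 < ⟪x, y⟫_ℝ := by
      have := inner_pos_of_pos hn0 x y hxp hyp
      linarith
    have hynx : y ≠ -x := by
      intro h
      have h1 : y i0 = -(x i0) := by rw [h]; rfl
      have := hxp i0
      have := hyp i0
      linarith
    have hgeo : IsMinGeodesic (geoSeg x y) x y := ⟨hnx, hny, Or.inl ⟨hynx, rfl⟩⟩
    have hmem : ∀ t ∈ Set.Icc (0:ℝ) 1, geoSeg x y t ∈
        Metric.sphere (0:EuclideanSpace ℝ (Fin n)) 1 ∩ {x | ∀ i, 0 < x i} := by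
      intro t ht
      have := geoSeg_mem hn0 x y hnx hny hxp hyp hxy ht.1 ht.2
      exact ⟨mem_sphere_zero_iff_norm.2 this.1, this.2⟩
    -- IVT
    set θ := Real.arccos ⟪x, y⟫_ℝ with hθ
    have hspos := sin_arccos_pos hc1 hc2
    set p := ⟪v0, x⟫_ℝ with hpdef
    set q := ⟪v0, y⟫_ℝ with hqdef
    set F : ℝ → ℝ := fun t => p * Real.sin ((1 - t) * θ) + q * Real.sin (t * θ) with hF
    have hF0 : F 0 = p * Real.sin θ := by simp [hF]
    have hF1 : F 1 = q * Real.sin θ := by simp [hF]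
    have hFcont : ContinuousOn F (Set.Icc 0 1) := by
      apply Continuous.continuousOn
      fun_prop
    have hmemIvt : (0:ℝ) ∈ Set.Icc (F 1) (F 0) := by
      constructor
      · rw [hF1]; nlinarith
      · rw [hF0]; nlinarith
    obtain ⟨ts, hts, hFts⟩ := intermediate_value_Icc' zero_le_one hFcont hmemIvt
    have hinner_ts : ⟪v0, geoSeg x y ts⟫_ℝ = 0 := by
      rw [inner_geoSeg v0 x y hc1 hc2 ts, ← hpdef, ← hqdef, ← hθ]
      field_simp
      linear_combination (Real.sin θ)⁻¹ * hFts
    have happ := hq x hxC y hyC (geoSeg x y) hgeo hmem 0 ts 1 le_rfl hts.1 hts.2 le_rfl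
    have hval_ts : ⟪mulVecE A (geoSeg x y ts), geoSeg x y ts⟫_ℝ = mu := by
      rw [hqf _ (geoSeg_norm x y hnx hny hc1 hc2 hts.1 hts.2), hinner_ts]
      ring
    have hval0 : ⟪mulVecE A (geoSeg x y 0), geoSeg x y 0⟫_ℝ = mu + (lam - mu) * p ^ 2 := by
      rw [geoSeg_zero x y hc1 hc2, hqf x hnx]
    have hval1 : ⟪mulVecE A (geoSeg x y 1), geoSeg x y 1⟫_ℝ = mu + (lam - mu) * q ^ 2 := by
      rw [geoSeg_one x y hc1 hc2, hqf y hny]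
    simp only [hval_ts, hval0, hval1] at happ
    have hp2 : 0 < p ^ 2 := pow_pos hp 2
    have hq2 : 0 < q ^ 2 := by nlinarith [mul_pos_of_neg_of_neg hq' hq']
    rcases max_cases (mu + (lam - mu) * p ^ 2) (mu + (lam - mu) * q ^ 2) with ⟨h, _⟩ | ⟨h, _⟩ <;>
      rw [h] at happ <;> nlinarith
  · -- nonneg eigenvector → quasiconvex
    rintro ⟨w, hwne, hwnn, hweig⟩
    -- w is a multiple of v0
    have hwform := mulVecE_formula hn0 A lam mu v hv heig0 heig w
    rw [hweig] at hwform
    have hwv0 : w = ⟪v0, w⟫_ℝ • v0 := by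
      have h1 : (mu - lam) • w = (mu - lam) • (⟪v0, w⟫_ℝ • v0) := by
        have := hwform
        rw [smul_smul]
        apply sub_eq_zero.1
        have expand : (mu - lam) • w - ((mu - lam) * ⟪v0, w⟫_ℝ) • v0 =
            (mu • w + ((lam - mu) * ⟪v0, w⟫_ℝ) • v0) - lam • w := by
          module
        rw [expand, ← this]
        abel
      exact smul_right_injective _ (sub_ne_zero.2 hlm.ne') h1
    set k := ⟪v0, w⟫_ℝ with hk
    have hkne : k ≠ 0 := by
      intro h
      rw [h, zero_smul] at hwv0
      exact hwne hwv0
    have hk2 : 0 < k ^ 2 := by positivity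
    intro x hx y hy γ hγ hmem t₁ t t₂ ht₁0 ht₁t htt₂ ht₂1
    obtain ⟨hnx, hny, hcase⟩ := hγ
    rcases hcase with ⟨hynx, hγeq⟩ | ⟨hyeqnx, _⟩
    · -- genuine geodesic case
      subst hγeq
      by_cases hxy : x = y
      · subst hxy
        rw [geoSeg_self x hnx, geoSeg_self x hnx]
        exact le_max_left _ _
      have hxp : ∀ i, 0 < x i := hx.2
      have hyp : ∀ i, 0 < y i := hy.2
      have hc1 : ⟪x, y⟫_ℝ < 1 := inner_lt_one_of_ne x y hnx hny hxy
      have hc2 : -1 < ⟪x, y⟫_ℝ := by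
        have := inner_pos_of_pos hn0 x y hxp hyp
        linarith
      set θ := Real.arccos ⟪x, y⟫_ℝ with hθ
      have hspos := sin_arccos_pos hc1 hc2
      have hθ0 : 0 < θ := Real.arccos_pos.2 hc1
      have hθπ : θ ≤ Real.pi := Real.arccos_le_pi _
      set P := ⟪w, x⟫_ℝ with hP
      set Q := ⟪w, y⟫_ℝ with hQ
      have hPnn : 0 ≤ P := inner_nonneg_of_nonneg w x hwnn (fun i => (hxp i).le)
      have hQnn : 0 ≤ Q := inner_nonneg_of_nonneg w y hwnn (fun i => (hyp i).le)
      -- H s = ⟪w, γ s⟫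
      have hHform : ∀ s : ℝ, ⟪w, geoSeg x y s⟫_ℝ * Real.sin θ =
          P * Real.sin ((1 - s) * θ) + Q * Real.sin (s * θ) := by
        intro s
        rw [inner_geoSeg w x y hc1 hc2 s, ← hθ, ← hP, ← hQ]
        have hsθ : Real.sin θ ≠ 0 := hspos.ne'
        field_simp
      have hHnn : ∀ s : ℝ, 0 ≤ s → s ≤ 1 → 0 ≤ ⟪w, geoSeg x y s⟫_ℝ := by
        intro s hs0 hs1
        have hmem' := hmem s ⟨hs0, hs1⟩
        exact inner_nonneg_of_nonneg w _ hwnn (fun i => (hmem'.2 i).le)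
      -- min property
      have hmin := sin_comb_min hθ0 hθπ hPnn hQnn ht₁0 ht₁t htt₂ ht₂1
      rw [← hHform t₁, ← hHform t₂, ← hHform t] at hmin
      -- turn into statement about H values
      have ht0 : 0 ≤ t := ht₁0.trans ht₁t
      have ht1 : t ≤ 1 := htt₂.trans ht₂1
      have hH1 := hHnn t₁ ht₁0 (ht₁t.trans ht1)
      have hH2 := hHnn t₂ (ht₁0.trans (ht₁t.trans htt₂)) ht₂1
      -- inner with v0 relation: ⟪w, z⟫ = k * ⟪v0, z⟫
      have hrel : ∀ z : EuclideanSpace ℝ (Fin n), ⟪w, z⟫_ℝ = k * ⟪v0, z⟫_ℝ := by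
        intro z
        rw [hwv0, real_inner_smul_left]
      -- final comparison
      have hnorms : ∀ s : ℝ, 0 ≤ s → s ≤ 1 → ‖geoSeg x y s‖ = 1 := fun s hs0 hs1 =>
        geoSeg_norm x y hnx hny hc1 hc2 hs0 hs1
      have hfval : ∀ s : ℝ, 0 ≤ s → s ≤ 1 →
          ⟪mulVecE A (geoSeg x y s), geoSeg x y s⟫_ℝ =
            mu + (lam - mu) * ⟪v0, geoSeg x y s⟫_ℝ ^ 2 := fun s hs0 hs1 =>
        hqf _ (hnorms s hs0 hs1)
      simp only []
      rw [hfval t ht0 ht1, hfval t₁ ht₁0 (ht₁t.trans ht1),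
        hfval t₂ (ht₁0.trans (ht₁t.trans htt₂)) ht₂1]
      -- use hmin: min (Ht₁ sinθ) (Ht₂ sinθ) ≤ Ht sinθ
      set H1 := ⟪w, geoSeg x y t₁⟫_ℝ
      set H2 := ⟪w, geoSeg x y t₂⟫_ℝ
      set Ht := ⟪w, geoSeg x y t⟫_ℝ
      rcases le_total H1 H2 with hcmp | hcmp
      · have hminval : min (H1 * Real.sin θ) (H2 * Real.sin θ) = H1 * Real.sin θ :=
          min_eq_left (by nlinarith)
        rw [hminval] at hmin
        have hle : H1 ≤ Ht := le_of_mul_le_mul_right (by linarith) hspos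
        have hsq : H1 ^ 2 ≤ Ht ^ 2 := by nlinarith
        have hsq' : k ^ 2 * ⟪v0, geoSeg x y t₁⟫_ℝ ^ 2 ≤ k ^ 2 * ⟪v0, geoSeg x y t⟫_ℝ ^ 2 := by
          have e1 : H1 = k * ⟪v0, geoSeg x y t₁⟫_ℝ := hrel _
          have e2 : Ht = k * ⟪v0, geoSeg x y t⟫_ℝ := hrel _
          nlinarith [hsq, e1, e2]
        have : ⟪v0, geoSeg x y t₁⟫_ℝ ^ 2 ≤ ⟪v0, geoSeg x y t⟫_ℝ ^ 2 :=
          le_of_mul_le_mul_left hsq' hk2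
        have : mu + (lam - mu) * ⟪v0, geoSeg x y t⟫_ℝ ^ 2 ≤
            mu + (lam - mu) * ⟪v0, geoSeg x y t₁⟫_ℝ ^ 2 := by nlinarith
        exact le_trans this (le_max_left _ _)
      · have hminval : min (H1 * Real.sin θ) (H2 * Real.sin θ) = H2 * Real.sin θ :=
          min_eq_right (by nlinarith)
        rw [hminval] at hmin
        have hle : H2 ≤ Ht := le_of_mul_le_mul_right (by linarith) hspos
        have hsq : H2 ^ 2 ≤ Ht ^ 2 := by nlinarith
        have hsq' : k ^ 2 * ⟪v0, geoSeg x y t₂⟫_ℝ ^ 2 ≤ k ^ 2 * ⟪v0, geoSeg x y t⟫_ℝ ^ 2 := by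
          have e1 : H2 = k * ⟪v0, geoSeg x y t₂⟫_ℝ := hrel _
          have e2 : Ht = k * ⟪v0, geoSeg x y t⟫_ℝ := hrel _
          nlinarith [hsq, e1, e2]
        have : ⟪v0, geoSeg x y t₂⟫_ℝ ^ 2 ≤ ⟪v0, geoSeg x y t⟫_ℝ ^ 2 :=
          le_of_mul_le_mul_left hsq' hk2
        have : mu + (lam - mu) * ⟪v0, geoSeg x y t⟫_ℝ ^ 2 ≤
            mu + (lam - mu) * ⟪v0, geoSeg x y t₂⟫_ℝ ^ 2 := by nlinarith
        exact le_trans this (le_max_right _ _)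
    · -- antipodal case: impossible since x, y have positive components
      exfalso
      have hxp : 0 < x i0 := hx.2 i0
      have hyp : 0 < y i0 := hy.2 i0
      have : y i0 = -(x i0) := by rw [hyeqnx]; rfl
      linarith
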